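/- arXiv:1307.4960 — 4 statements merged into one kernel-verified Lean document; each statement's English description precedes it below -/
import Mathlib

section
/- If S is a convex soft set whose values are totally ordered by inclusion (i.e. for all x, y, either f_S(x) ⊆ f_S(y) or f_S(y) ⊆ f_S(x)), then its complement S^c is a concave soft set. -/
def ConvexSoftSet {E U : Type*} [AddCommGroup E] [Module ℝ E] (f : E → Set U) : Prop :=
  ∀ x y : E, ∀ a : ℝ, a ∈ Set.Icc (0:ℝ) 1 → f x ∩ f y ⊆ f (a • x + (1 - a) • y)

def ConcaveSoftSet {E U : Type*} [AddCommGroup E] [Module ℝ E] (f : E → Set U) : Prop :=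
  ∀ x y : E, ∀ a : ℝ, a ∈ Set.Icc (0:ℝ) 1 → f (a • x + (1 - a) • y) ⊆ f x ∪ f y

theorem concaveSoftSet_compl_of_convex {E U : Type*} [AddCommGroup E] [Module ℝ E]
    (f : E → Set U) (hf : ConvexSoftSet f)
    (htot : ∀ x y : E, f x ⊆ f y ∨ f y ⊆ f x) :
    ConcaveSoftSet (fun x => (f x)ᶜ) := by
  intro x y a ha
  simp only [← Set.compl_inter]
  exact Set.compl_subset_compl.2 (hf x y a ha)
end

section
/- If S is a concave soft set whose values are totally ordered by inclusion (i.e. for all x, y, either f_S(x) ⊆ f_S(y) or f_S(y) ⊆ f_S(x)), then its complement S^c is a convex soft set. -/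
theorem convexSoftSet_compl_of_concave {E U : Type*} [AddCommGroup E] [Module ℝ E]
    (f : E → Set U) (hf : ConcaveSoftSet f)
    (htot : ∀ x y : E, f x ⊆ f y ∨ f y ⊆ f x) :
    ConvexSoftSet (fun x => (f x)ᶜ) := by
  intro x y a ha u hu
  rcases hu with ⟨hx, hy⟩
  intro hmem
  rcases hf x y a ha hmem with h | h
  · exact hx h
  · exact hy h
end

section
/- A soft set f over U with parameter space E is concave if and only if for every u ∈ U, the set {x ∈ E : u ∉ f(x)} is a convex subset of E. -/
theorem concaveSoftSet_iff_levels_convex {E U : Type*} [AddCommGroup E] [Module ℝ E]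
    (f : E → Set U) :
    ConcaveSoftSet f ↔ ∀ u : U, Convex ℝ {x : E | u ∉ f x} := by
  constructor
  · intro h u x hx y hy a b ha hb hab
    intro hu
    have hb' : b = 1 - a := by linarith
    subst hb'
    rcases h x y a ⟨ha, by linarith⟩ hu with h1 | h1
    · exact hx h1
    · exact hy h1
  · intro h x y a ⟨ha0, ha1⟩ u hu
    by_contra hcon
    simp only [Set.mem_union, not_or] at hcon
    exact (h u hcon.1 hcon.2 ha0 (by linarith) (by ring)) hu
end

section
/- A soft set f over U with parameter space E is convex if and only if for every u ∈ U, the set {x ∈ E : u ∈ f(x)} is a convex subset of E. -/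
theorem convexSoftSet_iff_levels_convex {E U : Type*} [AddCommGroup E] [Module ℝ E]
    (f : E → Set U) :
    ConvexSoftSet f ↔ ∀ u : U, Convex ℝ {x : E | u ∈ f x} := by
  constructor
  · intro h u x hx y hy a b ha hb hab
    have hb' : b = 1 - a := by linarith
    subst hb'
    exact h x y a ⟨ha, by linarith⟩ ⟨hx, hy⟩
  · intro h x y a ha u hu
    have := h u hu.1 hu.2 (a := a) (b := 1 - a) ha.1 (by linarith [ha.2]) (by ring)
    exact this
end
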